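/- arXiv:1912.09506 — 2 statements merged into one kernel-verified Lean document; each statement's English description precedes it below -/
import Mathlib

section
/- For every integer n ≥ 2, the function (t₁,…,t_n) ↦ (1/(1−t₁))·(1/t₂)·⋯·(1/t_n) is integrable on the ordered simplex {0 ≤ t₁ ≤ ⋯ ≤ t_n ≤ 1} ⊂ ℝⁿ and its integral over that simplex equals ζ(n), the value of the Riemann zeta function at n. -/
/-!
Expanding `(1 - t₁)⁻¹ = ∑ₖ t₁ᵏ` turns the integral into `∑ₖ ∫ t₁ᵏ / (t₂ ⋯ tₙ)`. Integrating out
`t₁ ∈ [0, t₂]` replaces `t₁ᵏ / t₂` by `t₂ᵏ / (k + 1)`, a term of the same shape in one variable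
fewer, so each summand equals `(k + 1)⁻ⁿ` and the series is `ζ(n)`.
-/

open MeasureTheory

/-- The ordered simplex `{0 ≤ t₁ ≤ ⋯ ≤ t_n ≤ 1} ⊆ ℝⁿ`. -/
def orderedSimplex (n : ℕ) : Set (Fin n → ℝ) :=
  {t | Monotone t ∧ ∀ i, t i ∈ Set.Icc (0 : ℝ) 1}

open Set
open scoped ENNReal

lemma Fin.monotone_cons_iff {α : Type*} [Preorder α] {n : ℕ} {x : α} {y : Fin (n + 1) → α} :
    Monotone (Fin.cons x y : Fin (n + 2) → α) ↔ x ≤ y 0 ∧ Monotone y := by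
  simp [Fin.monotone_iff_le_succ, Fin.forall_fin_succ]

lemma Fin.prod_univ_erase_zero {M : Type*} [CommMonoid M] {n : ℕ} (f : Fin (n + 1) → M) :
    ∏ i ∈ Finset.univ.erase 0, f i = ∏ j : Fin n, f j.succ := by
  have h : Finset.univ.erase (0 : Fin (n + 1)) = Finset.Ioi 0 := by
    ext i
    simp
  rw [h, Fin.Ioi_zero_eq_map, Finset.prod_map]
  rfl

lemma integrableOn_and_setIntegral_eq_of_lintegral_eq {α : Type*} [MeasurableSpace α]
    {μ : Measure α} {s : Set α} {f : α → ℝ} (hf : AEStronglyMeasurable f (μ.restrict s))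
    (hf₀ : 0 ≤ᵐ[μ.restrict s] f) {r : ℝ} (hr : 0 ≤ r)
    (h : ∫⁻ x in s, ENNReal.ofReal (f x) ∂μ = ENNReal.ofReal r) :
    IntegrableOn f s μ ∧ ∫ x in s, f x ∂μ = r := by
  refine ⟨⟨hf, ?_⟩, ?_⟩
  · rw [hasFiniteIntegral_iff_ofReal hf₀, h]
    exact ENNReal.ofReal_lt_top
  · rw [integral_eq_lintegral_of_nonneg_ae hf₀ hf, h, ENNReal.toReal_ofReal hr]

lemma lintegral_Icc_ofReal_pow_mul (k : ℕ) {c : ℝ} (hc : 0 ≤ c) (C : ℝ) :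
    ∫⁻ x in Icc 0 c, ENNReal.ofReal (x ^ k * C) = ENNReal.ofReal (c ^ (k + 1) / (k + 1) * C) := by
  have hpow : ∫ x in Icc 0 c, x ^ k = c ^ (k + 1) / (k + 1) := by
    rw [integral_Icc_eq_integral_Ioc, ← intervalIntegral.integral_of_le hc, integral_pow]
    simp
  rw [setLIntegral_congr_fun measurableSet_Icc fun x hx => ENNReal.ofReal_mul (pow_nonneg hx.1 k),
    lintegral_mul_const _ (by fun_prop), ← ofReal_integral_eq_lintegral_ofReal, hpow,
    ENNReal.ofReal_mul (by positivity)]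
  · exact (continuous_pow k).integrableOn_Icc
  · filter_upwards [ae_restrict_mem measurableSet_Icc] with x hx using pow_nonneg hx.1 k

lemma riemannZeta_natCast_eq_tsum {n : ℕ} (hn : 1 < n) :
    riemannZeta n = ((∑' k : ℕ, ((k : ℝ) + 1)⁻¹ ^ n : ℝ) : ℂ) := by
  rw [zeta_eq_tsum_one_div_nat_add_one_cpow (by simpa using hn), Complex.ofReal_tsum]
  congr with k
  push_cast
  simp [Complex.cpow_natCast]

lemma isClosed_orderedSimplex (n : ℕ) : IsClosed (orderedSimplex n) := by
  simp only [orderedSimplex, ofPred_and, ofPred_forall]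
  exact isClosed_monotone.inter
    (isClosed_iInter fun i => isClosed_Icc.preimage (continuous_apply i))

lemma Fin.cons_mem_orderedSimplex_iff {n : ℕ} {x : ℝ} {y : Fin (n + 1) → ℝ} :
    Fin.cons x y ∈ orderedSimplex (n + 2) ↔ y ∈ orderedSimplex (n + 1) ∧ x ∈ Icc 0 (y 0) := by
  simp only [orderedSimplex, mem_ofPred_eq, Fin.monotone_cons_iff]
  rw [Fin.forall_fin_succ]
  simp only [Fin.cons_zero, Fin.cons_succ, mem_Icc]
  constructor
  · rintro ⟨⟨hxy, hy⟩, ⟨hx0, -⟩, hy01⟩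
    exact ⟨⟨hy, hy01⟩, hx0, hxy⟩
  · rintro ⟨⟨hy, hy01⟩, hx0, hxy⟩
    exact ⟨⟨hxy, hy⟩, ⟨hx0, hxy.trans (hy01 0).2⟩, hy01⟩

lemma lintegral_orderedSimplex_one (f : ℝ → ℝ≥0∞) :
    ∫⁻ t in orderedSimplex 1, f (t 0) = ∫⁻ x in Icc 0 1, f x := by
  have h : orderedSimplex 1 = MeasurableEquiv.funUnique (Fin 1) ℝ ⁻¹' Icc 0 1 := by
    ext t
    simp [orderedSimplex, Subsingleton.monotone]
  rw [h]
  exact (volume_preserving_funUnique (Fin 1) ℝ).setLIntegral_comp_preimage_emb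
    (MeasurableEquiv.funUnique (Fin 1) ℝ).measurableEmbedding f (Icc 0 1)

lemma lintegral_cons_indicator_orderedSimplex {n : ℕ} (f : (Fin (n + 2) → ℝ) → ℝ≥0∞)
    (y : Fin (n + 1) → ℝ) :
    ∫⁻ x, (orderedSimplex (n + 2)).indicator f (Fin.cons x y) =
      (orderedSimplex (n + 1)).indicator (fun y => ∫⁻ x in Icc 0 (y 0), f (Fin.cons x y)) y := by
  by_cases hy : y ∈ orderedSimplex (n + 1)
  · rw [indicator_of_mem hy, ← lintegral_indicator measurableSet_Icc]
    congr 1 with x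
    by_cases hx : x ∈ Icc 0 (y 0) <;> simp [hx, hy, Fin.cons_mem_orderedSimplex_iff]
  · simp [Fin.cons_mem_orderedSimplex_iff, hy]

lemma lintegral_orderedSimplex_succ {n : ℕ} {f : (Fin (n + 2) → ℝ) → ℝ≥0∞} (hf : Measurable f) :
    ∫⁻ t in orderedSimplex (n + 2), f t =
      ∫⁻ y in orderedSimplex (n + 1), ∫⁻ x in Icc 0 (y 0), f (Fin.cons x y) := by
  have hS := (isClosed_orderedSimplex (n + 2)).measurableSet
  have he : MeasurePreserving
      (fun p : ℝ × (Fin (n + 1) → ℝ) => (Fin.cons p.1 p.2 : Fin (n + 2) → ℝ)) := by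
    convert (volume_preserving_piFinSuccAbove (fun _ : Fin (n + 2) => ℝ) 0).symm with p
    exact (Fin.insertNth_zero' p.1 p.2).symm
  calc ∫⁻ t in orderedSimplex (n + 2), f t
      = ∫⁻ p : ℝ × (Fin (n + 1) → ℝ), (orderedSimplex (n + 2)).indicator f (Fin.cons p.1 p.2) := by
        rw [← lintegral_indicator hS, ← he.lintegral_comp (hf.indicator hS)]
    _ = ∫⁻ y, ∫⁻ x, (orderedSimplex (n + 2)).indicator f (Fin.cons x y) := by
        rw [Measure.volume_eq_prod]
        exact lintegral_prod_symm' _ ((hf.indicator hS).comp he.measurable)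
    _ = _ := by
        simp only [lintegral_cons_indicator_orderedSimplex]
        exact lintegral_indicator (isClosed_orderedSimplex (n + 1)).measurableSet _

lemma lintegral_orderedSimplex_pow_mul_prod_inv (k n : ℕ) :
    ∫⁻ t in orderedSimplex (n + 1), ENNReal.ofReal (t 0 ^ k * ∏ j : Fin n, (t j.succ)⁻¹) =
      ENNReal.ofReal (((k : ℝ) + 1)⁻¹ ^ (n + 1)) := by
  induction n with
  | zero =>
    simpa using lintegral_orderedSimplex_one (fun x => ENNReal.ofReal (x ^ k * 1))
      |>.trans (lintegral_Icc_ofReal_pow_mul k zero_le_one 1)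
  | succ n ih =>
    have hne : ∀ᵐ y : Fin (n + 1) → ℝ, y 0 ≠ 0 := by
      rw [volume_pi]
      exact Measure.ae_eval_ne _ 0 0
    rw [lintegral_orderedSimplex_succ (by fun_prop)]
    simp only [Fin.cons_zero, Fin.cons_succ]
    calc _ = ∫⁻ y in orderedSimplex (n + 1), ENNReal.ofReal ((k + 1 : ℝ)⁻¹) *
          ENNReal.ofReal (y 0 ^ k * ∏ j : Fin n, (y j.succ)⁻¹) := by
          refine setLIntegral_congr_fun_ae (isClosed_orderedSimplex _).measurableSet ?_
          filter_upwards [hne] with y hy0 hy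
          rw [lintegral_Icc_ofReal_pow_mul k (hy.2 0).1, ← ENNReal.ofReal_mul (by positivity)]
          congr 1
          rw [Fin.prod_univ_succ]
          field_simp
          ring
      _ = _ := by
          rw [lintegral_const_mul _ (by fun_prop), ih, ← ENNReal.ofReal_mul (by positivity),
            ← pow_succ']

lemma lintegral_orderedSimplex_eq_tsum (n : ℕ) :
    ∫⁻ t in orderedSimplex (n + 1), ENNReal.ofReal ((1 - t 0)⁻¹ * ∏ j : Fin n, (t j.succ)⁻¹) =
      ∑' k : ℕ, ENNReal.ofReal (((k : ℝ) + 1)⁻¹ ^ (n + 1)) := by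
  have hne : ∀ᵐ t : Fin (n + 1) → ℝ, t 0 ≠ 1 := by
    rw [volume_pi]
    exact Measure.ae_eval_ne _ 0 1
  simp_rw [← lintegral_orderedSimplex_pow_mul_prod_inv]
  rw [← lintegral_tsum fun k => by fun_prop]
  refine setLIntegral_congr_fun_ae (isClosed_orderedSimplex _).measurableSet ?_
  filter_upwards [hne] with t ht1 ht
  have h0 : 0 ≤ t 0 := (ht.2 0).1
  have h1 : t 0 < 1 := lt_of_le_of_ne (ht.2 0).2 ht1
  have hP : 0 ≤ ∏ j : Fin n, (t j.succ)⁻¹ := Finset.prod_nonneg fun j _ => inv_nonneg.2 (ht.2 _).1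
  rw [← tsum_geometric_of_lt_one h0 h1, ← tsum_mul_right, ENNReal.ofReal_tsum_of_nonneg
    (fun k => by positivity) ((summable_geometric_of_lt_one h0 h1).mul_right _)]

/-- For every integer `n ≥ 2`, the function
`(t₁,…,t_n) ↦ (1/(1−t₁))·(1/t₂)·⋯·(1/t_n)` is integrable on the ordered
simplex `{0 ≤ t₁ ≤ ⋯ ≤ t_n ≤ 1}` and its integral equals `ζ(n)`. -/
theorem zeta_as_iterated_integral (n : ℕ) (hn : 2 ≤ n) :
    IntegrableOn
      (fun t : Fin n → ℝ =>
        (1 - (t ⟨0, by omega⟩ : ℂ))⁻¹ *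
          ∏ i ∈ Finset.univ.erase (⟨0, by omega⟩ : Fin n), ((t i : ℂ))⁻¹)
      (orderedSimplex n) volume ∧
    (∫ t in orderedSimplex n,
        (1 - (t ⟨0, by omega⟩ : ℂ))⁻¹ *
          ∏ i ∈ Finset.univ.erase (⟨0, by omega⟩ : Fin n), ((t i : ℂ))⁻¹)
      = riemannZeta n := by
  obtain ⟨m, rfl⟩ : ∃ m, n = m + 2 := ⟨n - 2, by omega⟩
  set g : (Fin (m + 2) → ℝ) → ℝ := fun t => (1 - t 0)⁻¹ * ∏ j : Fin (m + 1), (t j.succ)⁻¹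
  have hcast : (fun t : Fin (m + 2) → ℝ => (1 - (t ⟨0, by omega⟩ : ℂ))⁻¹ *
      ∏ i ∈ Finset.univ.erase (⟨0, by omega⟩ : Fin (m + 2)), ((t i : ℂ))⁻¹) =
      fun t => (g t : ℂ) := by
    funext t
    simp [g, Fin.prod_univ_erase_zero]
  have hg_nonneg : 0 ≤ᵐ[volume.restrict (orderedSimplex (m + 2))] g := by
    filter_upwards [ae_restrict_mem (isClosed_orderedSimplex _).measurableSet] with t ht
    exact mul_nonneg (inv_nonneg.2 (sub_nonneg.2 (ht.2 0).2))
      (Finset.prod_nonneg fun j _ => inv_nonneg.2 (ht.2 _).1)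
  have hsum : Summable fun k : ℕ => ((k : ℝ) + 1)⁻¹ ^ (m + 2) := by
    simpa [inv_pow] using (summable_nat_add_iff 1).2 (Real.summable_nat_pow_inv.2 (by omega))
  have hg_lintegral : ∫⁻ t in orderedSimplex (m + 2), ENNReal.ofReal (g t) =
      ENNReal.ofReal (∑' k : ℕ, ((k : ℝ) + 1)⁻¹ ^ (m + 2)) := by
    rw [lintegral_orderedSimplex_eq_tsum,
      ENNReal.ofReal_tsum_of_nonneg (fun k => by positivity) hsum]
  obtain ⟨hg_int, hg_integral⟩ := integrableOn_and_setIntegral_eq_of_lintegral_eq (by fun_prop)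
    hg_nonneg (tsum_nonneg fun k => by positivity) hg_lintegral
  rw [hcast, riemannZeta_natCast_eq_tsum (by omega), ← hg_integral]
  exact ⟨hg_int.ofReal, integral_ofReal⟩
end

section
/- Let r ≥ 1, let g₁,…,g_r : [0,1] → ℂ be continuous, and let 0 ≤ b ≤ 1. Then the integral of g₁(t₁)⋯g_r(t_r) over the simplex {0 ≤ t₁ ≤ ⋯ ≤ t_r ≤ 1} equals the sum over k = 0,…,r of the product of the integral of g₁(t₁)⋯g_k(t_k) over {0 ≤ t₁ ≤ ⋯ ≤ t_k ≤ b} with the integral of g_{k+1}(t_{k+1})⋯g_r(t_r) over {b ≤ t_{k+1} ≤ ⋯ ≤ t_r ≤ 1} (Chen's path-composition formula). -/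
open MeasureTheory

/-- The ordered simplex `{a ≤ t₁ ≤ ⋯ ≤ t_r ≤ b} ⊆ ℝʳ`. -/
def orderedSimplexIcc (r : ℕ) (a b : ℝ) : Set (Fin r → ℝ) :=
  {t | Monotone t ∧ ∀ i, t i ∈ Set.Icc a b}

/-!
Up to the null hyperplanes `t_i = b`, the simplex `{0 ≤ t₁ ≤ ⋯ ≤ t_r ≤ 1}` is the disjoint union
over `k` of the pieces on which exactly the first `k` coordinates lie below `b`. Concatenation
`(u, v) ↦ Fin.append u v` maps `{0 ≤ u₁ ≤ ⋯ ≤ u_k ≤ b} × {b ≤ v₁ ≤ ⋯ ≤ v_{r-k} ≤ 1}` onto the `k`-th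
piece preserving Lebesgue measure, and the integrand factors along it, so by Fubini the integral
over the `k`-th piece is the `k`-th summand.
-/

open Set

theorem Fin.monotone_append_iff {α : Type*} [Preorder α] {k m : ℕ} {u : Fin k → α}
    {v : Fin m → α} :
    Monotone (Fin.append u v) ↔ Monotone u ∧ Monotone v ∧ ∀ i j, u i ≤ v j := by
  have hlt (i : Fin k) (j : Fin m) : Fin.castAdd m i < Fin.natAdd k j := by
    simp only [Fin.lt_def, Fin.val_castAdd, Fin.val_natAdd]; omega
  refine ⟨fun h => ⟨fun i j hij => ?_, fun i j hij => ?_, fun i j => ?_⟩, ?_⟩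
  · simpa using h ((Fin.strictMono_castAdd m).monotone hij)
  · simpa using h ((Fin.strictMono_natAdd k).monotone hij)
  · simpa using h (hlt i j).le
  · rintro ⟨hu, hv, huv⟩ i j hij
    induction i using Fin.addCases with
    | left i =>
      induction j using Fin.addCases with
      | left j => simpa using hu ((Fin.strictMono_castAdd m).le_iff_le.1 hij)
      | right j => simpa using huv i j
    | right i =>
      induction j using Fin.addCases with
      | left j => exact absurd hij (hlt j i).not_ge
      | right j => simpa using hv ((Fin.strictMono_natAdd k).le_iff_le.1 hij)

namespace MeasurableEquiv

variable (α : Type*) [MeasurableSpace α] (k m : ℕ)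

def finAppend : (Fin k → α) × (Fin m → α) ≃ᵐ (Fin (k + m) → α) :=
  (sumPiEquivProdPi fun _ => α).symm.trans (piCongrLeft (fun _ => α) finSumFinEquiv)

variable {α k m}

@[simp]
theorem finAppend_apply (p : (Fin k → α) × (Fin m → α)) :
    finAppend α k m p = Fin.append p.1 p.2 := by
  ext i
  induction i using Fin.addCases with
  | left i =>
    rw [Fin.append_left, ← finSumFinEquiv_apply_left]
    exact piCongrLeft_apply_apply (β := fun _ => α) finSumFinEquiv _ (Sum.inl i)
  | right i =>
    rw [Fin.append_right, ← finSumFinEquiv_apply_right]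
    exact piCongrLeft_apply_apply (β := fun _ => α) finSumFinEquiv _ (Sum.inr i)

end MeasurableEquiv

theorem MeasurableEquiv.measurePreserving_finAppend {α : Type*} [MeasureSpace α]
    [SigmaFinite (volume : Measure α)] (k m : ℕ) :
    MeasurePreserving (finAppend α k m) volume volume :=
  (volume_measurePreserving_piCongrLeft (fun _ => α) finSumFinEquiv).comp
    (volume_measurePreserving_sumPiEquivProdPi_symm fun _ => α)

def orderedSimplexPiece (r k : ℕ) (a b c : ℝ) : Set (Fin r → ℝ) :=
  {t | Monotone t} ∩ univ.pi fun i => if (i : ℕ) < k then Icc a b else Icc b c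

section

variable {r : ℕ} {a b c : ℝ}

theorem orderedSimplexIcc_eq_inter_pi :
    orderedSimplexIcc r a c = {t | Monotone t} ∩ univ.pi fun _ => Icc a c := by
  ext t; exact and_congr_right' mem_univ_pi.symm

theorem isCompact_orderedSimplexIcc : IsCompact (orderedSimplexIcc r a c) := by
  rw [orderedSimplexIcc_eq_inter_pi, inter_comm]
  exact (isCompact_univ_pi fun _ => isCompact_Icc).inter_right isClosed_monotone

theorem measurableSet_orderedSimplexPiece (k : ℕ) :
    MeasurableSet (orderedSimplexPiece r k a b c) :=
  (isClosed_monotone.inter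
    (isClosed_set_pi fun _ _ => by split_ifs <;> exact isClosed_Icc)).measurableSet

theorem iUnion_orderedSimplexPiece (hab : a ≤ b) (hbc : b ≤ c) :
    ⋃ k : Fin (r + 1), orderedSimplexPiece r k a b c = orderedSimplexIcc r a c := by
  ext t
  simp only [mem_iUnion]
  constructor
  · rintro ⟨k, ht_mono, ht⟩
    refine ⟨ht_mono, fun i => ?_⟩
    have hti : t i ∈ if (i : ℕ) < k then Icc a b else Icc b c := ht i (mem_univ i)
    split_ifs at hti
    · exact Icc_subset_Icc le_rfl hbc hti
    · exact Icc_subset_Icc hab le_rfl hti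
  · rintro ⟨ht_mono, ht⟩
    classical
    -- `t` lies in the piece indexed by its first coordinate `≥ b` (or by `r` if there is none)
    have hex : ∃ n, n = r ∨ ∃ h : n < r, b ≤ t ⟨n, h⟩ := ⟨r, .inl rfl⟩
    have hk : Nat.find hex ≤ r := Nat.find_min' hex (.inl rfl)
    refine ⟨⟨Nat.find hex, Nat.lt_succ_of_le hk⟩, ht_mono, fun i _ => ?_⟩
    show t i ∈ if (i : ℕ) < Nat.find hex then Icc a b else Icc b c
    split_ifs with hi
    · have hti := Nat.find_min hex hi
      push Not at hti
      exact ⟨(ht i).1, (hti.2 i.isLt).le⟩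
    · obtain hkr | ⟨hkr, hbk⟩ := Nat.find_spec hex
      · omega
      · exact ⟨hbk.trans (ht_mono (Fin.le_def.2 (not_lt.1 hi))), (ht i).2⟩

theorem pairwise_aedisjoint_orderedSimplexPiece :
    Pairwise (Function.onFun (AEDisjoint volume)
      fun k : Fin (r + 1) => orderedSimplexPiece r k a b c) := by
  have key (k l : Fin (r + 1)) (hkl : (k : ℕ) < l) :
      volume (orderedSimplexPiece r k a b c ∩ orderedSimplexPiece r l a b c) = 0 := by
    have hk : (k : ℕ) < r := hkl.trans_le (Nat.lt_succ_iff.1 l.isLt)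
    refine measure_mono_null (fun t ht => ?_)
      (by rw [volume_pi]; exact Measure.pi_hyperplane (fun _ => volume) ⟨k, hk⟩ b)
    have h₁ := ht.1.2 ⟨k, hk⟩ (mem_univ _)
    have h₂ := ht.2.2 ⟨k, hk⟩ (mem_univ _)
    simp only [lt_irrefl, if_false, hkl, if_true] at h₁ h₂
    exact le_antisymm h₂.2 h₁.1
  intro k l hkl
  rcases hkl.lt_or_gt with h | h
  · exact key k l h
  · exact AEDisjoint.symm (key l k h)

theorem integral_orderedSimplexIcc_eq_sum {E : Type*} [NormedAddCommGroup E] [NormedSpace ℝ E]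
    (hab : a ≤ b) (hbc : b ≤ c) {f : (Fin r → ℝ) → E}
    (hf : IntegrableOn f (orderedSimplexIcc r a c)) :
    ∫ t in orderedSimplexIcc r a c, f t =
      ∑ k : Fin (r + 1), ∫ t in orderedSimplexPiece r k a b c, f t := by
  rw [← iUnion_orderedSimplexPiece hab hbc] at hf ⊢
  exact (integral_iUnion_ae (s := fun k : Fin (r + 1) => orderedSimplexPiece r k a b c)
    (fun k => (measurableSet_orderedSimplexPiece k).nullMeasurableSet)
    pairwise_aedisjoint_orderedSimplexPiece hf).trans (tsum_fintype _)

theorem finAppend_preimage_orderedSimplexPiece (k m : ℕ) :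
    MeasurableEquiv.finAppend ℝ k m ⁻¹' orderedSimplexPiece (k + m) k a b c =
      orderedSimplexIcc k a b ×ˢ orderedSimplexIcc m b c := by
  ext ⟨u, v⟩
  simp only [mem_preimage, MeasurableEquiv.finAppend_apply, orderedSimplexPiece, mem_inter_iff,
    mem_ofPred_eq, mem_univ_pi, Fin.forall_fin_add, Fin.append_left, Fin.append_right,
    Fin.val_castAdd, Fin.val_natAdd, Fin.monotone_append_iff, mem_prod, orderedSimplexIcc,
    Fin.is_lt, if_true, add_lt_iff_neg_left, Nat.not_lt_zero, if_false]
  constructor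
  · rintro ⟨⟨hu, hv, -⟩, hu', hv'⟩
    exact ⟨⟨hu, hu'⟩, hv, hv'⟩
  · rintro ⟨⟨hu, hu'⟩, hv, hv'⟩
    exact ⟨⟨hu, hv, fun i j => (hu' i).2.trans (hv' j).1⟩, hu', hv'⟩

theorem setIntegral_orderedSimplexPiece_prod {𝕜 : Type*} [RCLike 𝕜] {k m : ℕ} (h : k + m = r)
    (g : Fin r → ℝ → 𝕜) :
    ∫ t in orderedSimplexPiece r k a b c, ∏ i, g i (t i) =
      (∫ u in orderedSimplexIcc k a b, ∏ i : Fin k, g (Fin.castLE (by omega) i) (u i)) *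
      ∫ v in orderedSimplexIcc m b c, ∏ i : Fin m, g ⟨k + i, by omega⟩ (v i) := by
  subst h
  rw [← (MeasurableEquiv.measurePreserving_finAppend k m).setIntegral_preimage_emb
    (MeasurableEquiv.finAppend ℝ k m).measurableEmbedding,
    finAppend_preimage_orderedSimplexPiece, Measure.volume_eq_prod, ← setIntegral_prod_mul]
  simp only [MeasurableEquiv.finAppend_apply, Fin.prod_univ_add, Fin.append_left,
    Fin.append_right]
  rfl

theorem integrableOn_orderedSimplexIcc_prod {R : Type*} [NormedCommRing R] {g : Fin r → ℝ → R}
    (hg : ∀ i, ContinuousOn (g i) (Icc a c)) :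
    IntegrableOn (fun t => ∏ i, g i (t i)) (orderedSimplexIcc r a c) :=
  (continuousOn_finsetProd _ fun i _ =>
    (hg i).comp (continuous_apply i).continuousOn fun _ ht => ht.2 i).integrableOn_compact
    isCompact_orderedSimplexIcc

end

/-- Chen's path-composition formula: for continuous `g₁,…,g_r : [0,1] → ℂ`
and `0 ≤ b ≤ 1`, the integral of `g₁(t₁)⋯g_r(t_r)` over
`{0 ≤ t₁ ≤ ⋯ ≤ t_r ≤ 1}` equals the sum over `k = 0,…,r` of the product of
the integral of `g₁(t₁)⋯g_k(t_k)` over `{0 ≤ t₁ ≤ ⋯ ≤ t_k ≤ b}` with the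
integral of `g_{k+1}(t_{k+1})⋯g_r(t_r)` over `{b ≤ t_{k+1} ≤ ⋯ ≤ t_r ≤ 1}`. -/
theorem iteratedIntegral_comp (r : ℕ) (g : Fin r → ℝ → ℂ)
    (hg : ∀ i, ContinuousOn (g i) (Set.Icc (0 : ℝ) 1))
    (b : ℝ) (hb0 : 0 ≤ b) (hb1 : b ≤ 1) :
    (∫ t in orderedSimplexIcc r 0 1, ∏ i, g i (t i)) =
      ∑ k : Fin (r + 1),
        (∫ t in orderedSimplexIcc (k : ℕ) 0 b,
            ∏ i : Fin (k : ℕ), g (Fin.castLE k.is_le i) (t i)) *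
        (∫ t in orderedSimplexIcc (r - (k : ℕ)) b 1,
            ∏ i : Fin (r - (k : ℕ)),
              g ⟨(k : ℕ) + (i : ℕ), by have := i.isLt; have := k.is_le; omega⟩
                (t i)) := by
  rw [integral_orderedSimplexIcc_eq_sum hb0 hb1 (integrableOn_orderedSimplexIcc_prod hg)]
  exact Finset.sum_congr rfl fun k _ =>
    setIntegral_orderedSimplexPiece_prod (Nat.add_sub_of_le k.is_le) g
end
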